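/- If Y ~ Mult(n, p) is a multinomial random vector with m ≥ 2 categories, and i ≠ j are indices with probabilities p_i, p_j ∈ [0,1] not both zero, then P(Y_i = Y_j) → 0 as n → ∞. -/

import Mathlib

/-!
Write `S n = Y_i - Y_j = ∑_{k < n} ζ (X k)` with `ζ x = 1[x = i] - 1[x = j]`, a random walk on `ℤ`
with i.i.d. steps. For an integer-valued variable, `2π P(S = 0) = ∫_{-π}^{π} E[e^{itS}] dt`, and by
independence `E[e^{itS n}] = φ(t)^n`, where `φ(t) = 1 - p_i - p_j + p_i e^{it} + p_j e^{-it}`.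
When `p_i, p_j > 0` one has `|φ(t)| < 1` unless `sin t = 0`, so dominated convergence gives
`P(S n = 0) → 0`. When `p_i = 0`, a.s. `Y_i = 0`, and `P(Y_j = 0) = (1 - p_j)^n → 0`.
-/

open Filter MeasureTheory ProbabilityTheory Complex Real Topology

lemma integral_exp_mul_intCast_mul_I (z : ℤ) :
    ∫ t in -π..π, exp (t * z * I) = if z = 0 then ((2 * π : ℝ) : ℂ) else 0 := by
  split_ifs with hz
  · simp [hz, two_mul]
  · have hzI : (z : ℂ) * I ≠ 0 := by simp [hz]
    simp_rw [show ∀ t : ℝ, (t : ℂ) * z * I = z * I * t from fun t => by ring]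
    rw [integral_exp_mul_complex hzI, div_eq_zero_iff, sub_eq_zero]
    left
    calc exp (z * I * π) = exp (z * I * ↑(-π)) * exp (z * (2 * π * I)) := by
          rw [← Complex.exp_add]; push_cast; ring_nf
      _ = exp (z * I * ↑(-π)) := by rw [exp_int_mul_two_pi_mul_I, mul_one]

lemma integral_charFun_map_intCast (ν : Measure ℤ) [IsFiniteMeasure ν] :
    ∫ t in -π..π, charFun (ν.map ((↑) : ℤ → ℝ)) t = 2 * π * ν.real {0} := by
  have hcharFun (t : ℝ) : charFun (ν.map ((↑) : ℤ → ℝ)) t = ∫ z, exp (t * z * I) ∂ν := by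
    rw [charFun_apply_real, integral_map (measurable_of_countable _).aemeasurable
      (by fun_prop : Continuous fun x : ℝ => exp (t * x * I)).aestronglyMeasurable]
    simp
  have hint : Integrable (Function.uncurry fun (z : ℤ) (t : ℝ) => exp (t * z * I))
      (ν.prod (volume.restrict (Set.Ioc (-π) π))) := by
    refine Integrable.of_bound (C := 1) ?_ (Eventually.of_forall fun x => ?_)
    · exact (Continuous.measurable (by fun_prop)).aestronglyMeasurable
    · simp [Function.uncurry, norm_exp]
  have hindicator : (fun z : ℤ => if z = 0 then ((2 * π : ℝ) : ℂ) else 0) =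
      Set.indicator {0} fun _ => ((2 * π : ℝ) : ℂ) := by
    ext z; simp [Set.indicator_apply]
  simp_rw [hcharFun, intervalIntegral.integral_of_le (neg_le_self pi_pos.le)]
  rw [← integral_integral_swap hint]
  simp_rw [← intervalIntegral.integral_of_le (neg_le_self pi_pos.le),
    integral_exp_mul_intCast_mul_I, hindicator]
  rw [integral_indicator_const _ (measurableSet_singleton 0)]
  simp [Complex.real_smul, mul_comm]

section RandomWalk

variable {Ω : Type*} [MeasurableSpace Ω] {P : Measure Ω} {Y : ℕ → Ω → ℤ}

lemma charFun_map_sum_eq_pow (hY : ∀ k, Measurable (Y k)) (hindep : iIndepFun Y P)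
    (hident : ∀ k, IdentDistrib (Y k) (Y 0) P P) (n : ℕ) :
    charFun (P.map fun ω => ((∑ k ∈ Finset.range n, Y k ω : ℤ) : ℝ)) =
      charFun (P.map fun ω => (Y 0 ω : ℝ)) ^ n := by
  have hcast : Measurable ((↑) : ℤ → ℝ) := measurable_of_countable _
  have hindep' : iIndepFun (fun k ω => (Y k ω : ℝ)) P := hindep.comp _ fun _ => hcast
  have hlaw (k : ℕ) : P.map (fun ω => (Y k ω : ℝ)) = P.map (fun ω => (Y 0 ω : ℝ)) :=
    ((hident k).comp hcast).map_eq
  push_cast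
  rw [(hindep'.restrict _).charFun_map_fun_finsetSum_eq_prod (X := fun k ω => (Y k ω : ℝ))
    fun k _ => (hcast.comp (hY k)).aemeasurable]
  simp [hlaw]

lemma two_pi_mul_measureReal_sum_eq_zero [IsFiniteMeasure P] (hY : ∀ k, Measurable (Y k))
    (hindep : iIndepFun Y P) (hident : ∀ k, IdentDistrib (Y k) (Y 0) P P) (n : ℕ) :
    2 * π * P.real {ω | ∑ k ∈ Finset.range n, Y k ω = 0} =
      ∫ t in -π..π, charFun (P.map fun ω => (Y 0 ω : ℝ)) t ^ n := by
  have hS : Measurable fun ω => ∑ k ∈ Finset.range n, Y k ω :=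
    Finset.measurable_fun_sum _ fun k _ => hY k
  have h := integral_charFun_map_intCast (P.map fun ω => ∑ k ∈ Finset.range n, Y k ω)
  rw [Measure.map_map (measurable_of_countable _) hS,
    map_measureReal_apply hS (measurableSet_singleton 0)] at h
  simp only [Function.comp_def, charFun_map_sum_eq_pow hY hindep hident, Pi.pow_apply] at h
  exact h.symm

lemma tendsto_measure_sum_eq_zero [IsProbabilityMeasure P] (hY : ∀ k, Measurable (Y k))
    (hindep : iIndepFun Y P) (hident : ∀ k, IdentDistrib (Y k) (Y 0) P P)
    (hcharFun : ∀ᵐ t, ‖charFun (P.map fun ω => (Y 0 ω : ℝ)) t‖ < 1) :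
    Tendsto (fun n => P {ω | ∑ k ∈ Finset.range n, Y k ω = 0}) atTop (𝓝 0) := by
  have : IsProbabilityMeasure (P.map fun ω => (Y 0 ω : ℝ)) :=
    Measure.isProbabilityMeasure_map ((measurable_of_countable _).comp (hY 0)).aemeasurable
  have hDCT : Tendsto (fun n : ℕ => ∫ t in -π..π, charFun (P.map fun ω => (Y 0 ω : ℝ)) t ^ n)
      atTop (𝓝 0) := by
    have := intervalIntegral.tendsto_integral_filter_of_dominated_convergence
      (a := -π) (b := π) (μ := volume) (l := atTop) (f := fun _ => (0 : ℂ))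
      (F := fun n t => charFun (P.map fun ω => (Y 0 ω : ℝ)) t ^ n) (fun _ => 1)
      (Eventually.of_forall fun n => (continuous_charFun.pow n).aestronglyMeasurable)
      (Eventually.of_forall fun n => Eventually.of_forall fun t _ => by
        rw [norm_pow]; exact pow_le_one₀ (norm_nonneg _) (norm_charFun_le_one t))
      intervalIntegrable_const
      (hcharFun.mono fun t ht _ => tendsto_pow_atTop_nhds_zero_of_norm_lt_one ht)
    simpa using this
  have hreal : Tendsto (fun n => P.real {ω | ∑ k ∈ Finset.range n, Y k ω = 0}) atTop (𝓝 0) := by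
    simp_rw [← two_pi_mul_measureReal_sum_eq_zero hY hindep hident] at hDCT
    have := ((continuous_re.tendsto 0).comp hDCT).const_mul (2 * π)⁻¹
    rw [Complex.zero_re, mul_zero] at this
    refine this.congr fun n => ?_
    simp [field]
  simp only [measureReal_def] at hreal
  rwa [← ENNReal.toReal_zero, ENNReal.tendsto_toReal_iff (fun _ => measure_ne_top _ _)
    ENNReal.zero_ne_top] at hreal

end RandomWalk

lemma charFun_map_comp_eq_sum {Ω α : Type*} [MeasurableSpace Ω] {P : Measure Ω}
    [IsFiniteMeasure P] [Fintype α] [MeasurableSpace α] [MeasurableSingletonClass α]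
    {X : Ω → α} (hX : Measurable X) (f : α → ℝ) (t : ℝ) :
    charFun (P.map fun ω => f (X ω)) t = ∑ a, (P.real (X ⁻¹' {a}) : ℂ) * exp (t * f a * I) := by
  have hf : Measurable f := measurable_of_finite f
  rw [← Function.comp_def, ← Measure.map_map hf hX, charFun_apply_real,
    integral_map hf.aemeasurable
      (by fun_prop : Continuous fun x : ℝ => exp (t * x * I)).aestronglyMeasurable,
    integral_fintype Integrable.of_finite]
  simp [map_measureReal_apply hX (measurableSet_singleton _), Complex.real_smul]

section IndicatorDiff

variable {α : Type*} [DecidableEq α]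

def indicatorDiff (a b x : α) : ℤ := (if x = a then 1 else 0) - (if x = b then 1 else 0)

lemma sum_indicatorDiff_eq_zero_iff {ι : Type*} (s : Finset ι) (f : ι → α) (a b : α) :
    ∑ k ∈ s, indicatorDiff a b (f k) = 0 ↔
      (s.filter fun k => f k = a).card = (s.filter fun k => f k = b).card := by
  simp [indicatorDiff, Finset.sum_sub_distrib, Finset.sum_boole, sub_eq_zero]

lemma sum_mul_exp_indicatorDiff [Fintype α] {a b : α} (hab : a ≠ b) (q : α → ℝ) (t : ℝ) :
    ∑ x, (q x : ℂ) * exp (t * indicatorDiff a b x * I) =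
      ((∑ x, q x - q a - q b : ℝ) : ℂ) + q a * exp (t * I) + q b * exp (-t * I) := by
  have hterm (x : α) : (q x : ℂ) * exp (t * indicatorDiff a b x * I) =
      q x + (if x = a then q a * (exp (t * I) - 1) else 0) +
        (if x = b then q b * (exp (-t * I) - 1) else 0) := by
    by_cases hxa : x = a
    · subst hxa
      simp [indicatorDiff, hab, mul_sub]
    by_cases hxb : x = b
    · subst hxb
      simp [indicatorDiff, Ne.symm hab, mul_sub]
    simp [indicatorDiff, hxa, hxb]
  simp only [hterm, Finset.sum_add_distrib, Finset.sum_ite_eq', Finset.mem_univ, if_true]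
  push_cast
  ring

end IndicatorDiff

lemma norm_add_mul_exp_add_mul_exp_neg_lt_one {a b t : ℝ} (ha : 0 < a) (hb : 0 < b)
    (hab : a + b ≤ 1) (ht : Real.sin t ≠ 0) :
    ‖((1 - a - b : ℝ) : ℂ) + a * exp (t * I) + b * exp (-t * I)‖ < 1 := by
  have hform : ((1 - a - b : ℝ) : ℂ) + a * exp (t * I) + b * exp (-t * I) =
      ((1 - a - b + (a + b) * Real.cos t : ℝ) : ℂ) + ((a - b) * Real.sin t : ℝ) * I := by
    rw [← ofReal_neg, exp_mul_I, exp_mul_I]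
    push_cast
    rw [Complex.cos_neg, Complex.sin_neg]
    ring
  have hgap : 1 - ((1 - a - b + (a + b) * Real.cos t) ^ 2 + ((a - b) * Real.sin t) ^ 2) =
      2 * (1 - a - b) * (a + b) * (1 - Real.cos t) + 4 * a * b * Real.sin t ^ 2 := by
    linear_combination (-(a + b) ^ 2) * Real.sin_sq_add_cos_sq t
  have hcos := Real.cos_le_one t
  have hsin : 0 < Real.sin t ^ 2 := by positivity
  rw [hform, norm_add_mul_I, Real.sqrt_lt' one_pos, one_pow]
  nlinarith [mul_nonneg (mul_nonneg (sub_nonneg.2 hab) (add_pos ha hb).le) (sub_nonneg.2 hcos),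
    mul_pos (mul_pos ha hb) hsin]

lemma ae_sin_ne_zero : ∀ᵐ t : ℝ, Real.sin t ≠ 0 :=
  measure_mono_null (fun _ ht => Real.sin_eq_zero_iff.1 (not_not.1 ht))
    ((Set.countable_range fun n : ℤ => n * π).measure_zero _)

section CategoricalSequence

variable {Ω α : Type*} [MeasurableSpace Ω] {P : Measure Ω} [IsProbabilityMeasure P]
  [MeasurableSpace α] [MeasurableSingletonClass α] {X : ℕ → Ω → α}

lemma tendsto_measure_forall_ne (hX : ∀ k, Measurable (X k)) (hindep : iIndepFun X P) {a : α}
    {c : ENNReal} (hc : ∀ k, P {ω | X k ω = a} = c) (hc0 : c ≠ 0) :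
    Tendsto (fun n => P {ω | ∀ k ∈ Finset.range n, X k ω ≠ a}) atTop (𝓝 0) := by
  have hmeasure (n : ℕ) : P {ω | ∀ k ∈ Finset.range n, X k ω ≠ a} = (1 - c) ^ n := by
    have hcompl (k : ℕ) : P (X k ⁻¹' {a})ᶜ = 1 - c := by
      rw [prob_compl_eq_one_sub (hX k (measurableSet_singleton a))]
      exact congrArg (1 - ·) (hc k)
    have hinter : {ω | ∀ k ∈ Finset.range n, X k ω ≠ a} = ⋂ k ∈ Finset.range n, X k ⁻¹' {a}ᶜ := by
      ext ω; simp
    rw [hinter, hindep.meas_biInter fun k _ => ⟨{a}ᶜ, (measurableSet_singleton a).compl, rfl⟩]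
    simp [hcompl]
  simp_rw [hmeasure]
  exact ENNReal.tendsto_pow_atTop_nhds_zero_of_lt_one
    (ENNReal.sub_lt_self ENNReal.one_ne_top one_ne_zero hc0)

variable [DecidableEq α]

lemma tendsto_measure_card_filter_eq_of_measure_eq_zero (hX : ∀ k, Measurable (X k))
    (hindep : iIndepFun X P) {a b : α} (ha : ∀ k, P {ω | X k ω = a} = 0)
    {c : ENNReal} (hb : ∀ k, P {ω | X k ω = b} = c) (hc0 : c ≠ 0) :
    Tendsto (fun n => P {ω | ((Finset.range n).filter fun k => X k ω = a).card =
        ((Finset.range n).filter fun k => X k ω = b).card}) atTop (𝓝 0) := by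
  have hnever_a : ∀ᵐ ω ∂P, ∀ k, X k ω ≠ a := ae_all_iff.2 fun k => by
    simpa [ae_iff] using ha k
  refine tendsto_of_tendsto_of_tendsto_of_le_of_le tendsto_const_nhds
    (tendsto_measure_forall_ne hX hindep hb hc0) (fun n => zero_le) fun n => ?_
  refine measure_mono_ae (hnever_a.mono fun ω hω (hcard : _ = _) => ?_)
  simp only [Finset.filter_false_of_mem fun k _ => hω k, Finset.card_empty] at hcard
  show ∀ k ∈ Finset.range n, X k ω ≠ b
  simpa using Finset.card_eq_zero.1 hcard.symm

lemma tendsto_measure_card_filter_eq_of_pos [Fintype α] (hX : ∀ k, Measurable (X k))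
    (hindep : iIndepFun X P) {p : α → ℝ} (hp0 : ∀ x, 0 ≤ p x) (hpsum : ∑ x, p x = 1)
    (hXdist : ∀ k x, P {ω | X k ω = x} = ENNReal.ofReal (p x))
    {a b : α} (hab : a ≠ b) (hpa : 0 < p a) (hpb : 0 < p b) :
    Tendsto (fun n => P {ω | ((Finset.range n).filter fun k => X k ω = a).card =
        ((Finset.range n).filter fun k => X k ω = b).card}) atTop (𝓝 0) := by
  have hdiff : Measurable (indicatorDiff a b) := measurable_of_finite _
  have hlaw (x : α) : P.real (X 0 ⁻¹' {x}) = p x := by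
    rw [measureReal_def]
    exact (congrArg ENNReal.toReal (hXdist 0 x)).trans (ENNReal.toReal_ofReal (hp0 x))
  have hident (k : ℕ) : IdentDistrib (X k) (X 0) P P :=
    ⟨(hX k).aemeasurable, (hX 0).aemeasurable, Measure.ext_of_singleton fun x => by
      rw [Measure.map_apply (hX k) (measurableSet_singleton x),
        Measure.map_apply (hX 0) (measurableSet_singleton x)]
      exact (hXdist k x).trans (hXdist 0 x).symm⟩
  have hpab : p a + p b ≤ 1 := by
    rw [← hpsum, ← Finset.sum_pair hab]
    exact Finset.sum_le_sum_of_subset_of_nonneg (Finset.subset_univ _) fun x _ _ => hp0 x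
  simp_rw [← sum_indicatorDiff_eq_zero_iff]
  refine tendsto_measure_sum_eq_zero (fun k => hdiff.comp (hX k)) (hindep.comp _ fun _ => hdiff)
    (fun k => (hident k).comp hdiff) ?_
  filter_upwards [ae_sin_ne_zero] with t ht
  have hcharFun := charFun_map_comp_eq_sum (P := P) (hX 0) (fun x => (indicatorDiff a b x : ℝ)) t
  push_cast at hcharFun
  rw [hcharFun]
  simp_rw [hlaw]
  rw [sum_mul_exp_indicatorDiff hab, hpsum]
  exact norm_add_mul_exp_add_mul_exp_neg_lt_one hpa hpb hpab ht

end CategoricalSequence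

theorem multinomial_components_distinct_general
    {Ω : Type*} [MeasurableSpace Ω] (P : Measure Ω) [IsProbabilityMeasure P]
    (m : ℕ) (p : Fin m → ℝ)
    (hp01 : ∀ i, 0 ≤ p i ∧ p i ≤ 1) (hpsum : ∑ i, p i = 1)
    (X : ℕ → Ω → Fin m) (hXmeas : ∀ k, Measurable (X k))
    (hXindep : iIndepFun X P)
    (hXdist : ∀ k i, P {ω | X k ω = i} = ENNReal.ofReal (p i))
    (i j : Fin m) (hij : i ≠ j) (hnotzero : ¬(p i = 0 ∧ p j = 0)) :
    Tendsto
      (fun n => P {ω |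
          ((Finset.range n).filter fun k => X k ω = i).card =
          ((Finset.range n).filter fun k => X k ω = j).card})
      atTop (nhds 0) := by
  rcases (hp01 i).1.eq_or_lt with hpi | hpi
  · have hpj : 0 < p j := (hp01 j).1.lt_of_ne fun hpj => hnotzero ⟨hpi.symm, hpj.symm⟩
    exact tendsto_measure_card_filter_eq_of_measure_eq_zero hXmeas hXindep
      (fun k => by rw [hXdist, ← hpi, ENNReal.ofReal_zero]) (fun k => hXdist k j)
      (ENNReal.ofReal_pos.2 hpj).ne'
  rcases (hp01 j).1.eq_or_lt with hpj | hpj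
  · refine (tendsto_measure_card_filter_eq_of_measure_eq_zero hXmeas hXindep
      (fun k => by rw [hXdist, ← hpj, ENNReal.ofReal_zero]) (fun k => hXdist k i)
      (ENNReal.ofReal_pos.2 hpi).ne').congr fun n => congrArg P (Set.ext fun ω => eq_comm)
  exact tendsto_measure_card_filter_eq_of_pos hXmeas hXindep (fun v => (hp01 v).1) hpsum hXdist
    hij hpi hpj

/-- If `Y ~ Mult(n, p)` is a multinomial random vector with `m ≥ 2` categories
(realized as the counts `Y n ω i = #{k < n : X k ω = i}` of i.i.d. categorical
variables `X k` with `P(X k = i) = p i`), and `i ≠ j` are indices with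
probabilities `p i, p j ∈ [0,1]` not both zero, then `P(Y_i = Y_j) → 0`
as `n → ∞`. -/
theorem multinomial_components_distinct
    {Ω : Type*} [MeasurableSpace Ω] (P : Measure Ω) [IsProbabilityMeasure P]
    (m : ℕ) (hm : 2 ≤ m) (p : Fin m → ℝ)
    (hp01 : ∀ i, 0 ≤ p i ∧ p i ≤ 1) (hpsum : ∑ i, p i = 1)
    (X : ℕ → Ω → Fin m) (hXmeas : ∀ k, Measurable (X k))
    (hXindep : iIndepFun X P)
    (hXdist : ∀ k i, P {ω | X k ω = i} = ENNReal.ofReal (p i))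
    (i j : Fin m) (hij : i ≠ j) (hnotzero : ¬(p i = 0 ∧ p j = 0)) :
    Tendsto
      (fun n => P {ω |
          ((Finset.range n).filter fun k => X k ω = i).card =
          ((Finset.range n).filter fun k => X k ω = j).card})
      atTop (nhds 0) :=
  multinomial_components_distinct_general P m p hp01 hpsum X hXmeas hXindep hXdist i j hij hnotzero
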